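/- Let p be an odd prime, n and r ≥ 1 natural numbers, and suppose f_0, f_1, …, f_r : ℚ_p → ℚ_p are functions such that f_0(x) = x^n for all x, and for each j < r and each x ∈ ℚ_p the sequence N ↦ Σ_{u=0}^{p^N−1} (−1)^u f_j(x+u) converges in ℚ_p to f_{j+1}(x). Then for every x ∈ ℚ_p, f_r(x) = Σ_{k=0}^{n} (n choose k) E_k^{(r)} x^{n−k}, where E_k^{(r)} ∈ ℚ are the Euler numbers of order r viewed in ℚ_p via the canonical map; that is, ∫_{ℤ_p}⋯∫_{ℤ_p} (x_1+⋯+x_r+x)^n dμ_{−1}(x_1)⋯dμ_{−1}(x_r) = E_n^{(r)}(x), the n-th Euler polynomial of order r evaluated at x. -/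

import Mathlib

open Filter Finset

/-- The `n`-th Euler number of order `r`:
`E_n^{(r)} = ∑_{i₁+⋯+i_r = n} (n!/(i₁!⋯i_r!)) E_{i₁} ⋯ E_{i_r}`, built from a sequence
`E : ℕ → ℚ` of Euler numbers. -/
def eulerNumberOrder (E : ℕ → ℚ) (r n : ℕ) : ℚ :=
  ∑ i ∈ Finset.Nat.antidiagonalTuple r n,
    (Nat.multinomial Finset.univ i : ℚ) * ∏ j : Fin r, E (i j)

/-!
Write `a ⋆ b` for the binomial convolution `(a ⋆ b)ₙ = ∑ₖ C(n,k) aₖ b_{n-k}`; it is commutative and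
associative (it multiplies exponential generating functions). Then `E^{(r+1)} = E ⋆ E^{(r)}`, and
the Euler polynomial `Eₘ(x) = (E ⋆ x^·)ₘ` satisfies `Eₘ(x+1) + Eₘ(x) = 2xᵐ` by the recurrence
defining `E`. Hence the alternating sum of `(x+u)ᵐ` over `u < p^N` telescopes to
`(Eₘ(x) + Eₘ(x + p^N)) / 2` (as `p^N` is odd), which tends to `Eₘ(x)` because `p^N → 0` in `ℚ_p`.
By linearity the fermionic integral sends `(E^{(r)} ⋆ x^·)ₙ` to
`(E^{(r)} ⋆ (E ⋆ x^·))ₙ = (E^{(r+1)} ⋆ x^·)ₙ`, and induction on `r` concludes.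
-/

open Topology

def binomialConv {R : Type*} [CommSemiring R] (a b : ℕ → R) (n : ℕ) : R :=
  ∑ k ∈ range (n + 1), n.choose k * a k * b (n - k)

section binomialConv

variable {R : Type*} [CommSemiring R]

theorem binomialConv_eq_sum_antidiagonal (a b : ℕ → R) (n : ℕ) :
    binomialConv a b n = ∑ ij ∈ antidiagonal n, n.choose ij.1 * a ij.1 * b ij.2 := by
  rw [Nat.sum_antidiagonal_eq_sum_range_succ_mk]
  rfl

theorem binomialConv_comm (a b : ℕ → R) : binomialConv a b = binomialConv b a := by
  ext n
  rw [binomialConv_eq_sum_antidiagonal, binomialConv_eq_sum_antidiagonal,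
    ← Nat.sum_antidiagonal_swap]
  refine sum_congr rfl fun ij hij => ?_
  rw [HasAntidiagonal.mem_antidiagonal] at hij
  rw [Prod.fst_swap, Prod.snd_swap, ← hij, Nat.choose_symm_add]
  ring

theorem binomialConv_assoc (a b c : ℕ → R) :
    binomialConv (binomialConv a b) c = binomialConv a (binomialConv b c) := by
  ext n
  simp only [binomialConv_eq_sum_antidiagonal, sum_mul, mul_sum, sum_sigma']
  refine sum_nbij' (fun ⟨⟨_, l⟩, ⟨i, k⟩⟩ ↦ ⟨(i, k + l), (k, l)⟩)
    (fun ⟨⟨i, _⟩, ⟨k, l⟩⟩ ↦ ⟨(i + k, l), (i, k)⟩) ?_ ?_ ?_ ?_ ?_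
  · rintro ⟨⟨s, l⟩, ⟨i, k⟩⟩ h
    simp only [mem_sigma, HasAntidiagonal.mem_antidiagonal, and_true] at h ⊢
    omega
  · rintro ⟨⟨i, t⟩, ⟨k, l⟩⟩ h
    simp only [mem_sigma, HasAntidiagonal.mem_antidiagonal, and_true] at h ⊢
    omega
  · rintro ⟨⟨s, l⟩, ⟨i, k⟩⟩ h
    simp only [mem_sigma, HasAntidiagonal.mem_antidiagonal] at h
    obtain ⟨rfl, rfl⟩ := h
    rfl
  · rintro ⟨⟨i, t⟩, ⟨k, l⟩⟩ h
    simp only [mem_sigma, HasAntidiagonal.mem_antidiagonal] at h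
    obtain ⟨rfl, rfl⟩ := h
    rfl
  · rintro ⟨⟨s, l⟩, ⟨i, k⟩⟩ h
    simp only [mem_sigma, HasAntidiagonal.mem_antidiagonal] at h
    obtain ⟨rfl, rfl⟩ := h
    have hchoose := Nat.choose_mul (n := i + k + l) (k := i + k) (s := i) (by omega)
    rw [show i + k + l - i = k + l by omega, show i + k - i = k by omega] at hchoose
    calc _ = (((i + k + l).choose (i + k) * (i + k).choose i : ℕ) : R) * (a i * b k * c l) := by
          push_cast; ring
      _ = _ := by rw [hchoose]; push_cast; ring

theorem binomialConv_pow_pow (x y : R) (n : ℕ) :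
    binomialConv (x ^ ·) (y ^ ·) n = (x + y) ^ n := by
  rw [add_pow, binomialConv]
  exact sum_congr rfl fun k _ => by ring

theorem binomialConv_single_zero_left (c : R) (b : ℕ → R) (n : ℕ) :
    binomialConv (Pi.single 0 c) b n = c * b n := by
  rw [binomialConv, sum_eq_single_of_mem 0 (by simp) fun k _ hk => by simp [hk]]
  simp

theorem binomialConv_add_left (a a' b : ℕ → R) :
    binomialConv (a + a') b = binomialConv a b + binomialConv a' b := by
  ext n
  simp only [binomialConv, Pi.add_apply, ← sum_add_distrib]
  exact sum_congr rfl fun k _ => by ring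

theorem sum_mul_binomialConv {ι : Type*} (s : Finset ι) (c : ι → R) (a : ℕ → R)
    (g : ι → ℕ → R) (n : ℕ) :
    ∑ u ∈ s, c u * binomialConv a (g u) n = binomialConv a (fun m => ∑ u ∈ s, c u * g u m) n := by
  simp only [binomialConv, mul_sum]
  rw [sum_comm]
  exact sum_congr rfl fun k _ => sum_congr rfl fun u _ => by ring

theorem map_binomialConv {S : Type*} [CommSemiring S] (φ : R →+* S) (a b : ℕ → R) (n : ℕ) :
    φ (binomialConv a b n) = binomialConv (fun k => φ (a k)) (fun k => φ (b k)) n := by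
  simp [binomialConv]

theorem tendsto_binomialConv_right [TopologicalSpace R] [IsTopologicalSemiring R] {ι : Type*}
    {l : Filter ι} (a : ℕ → R) {g : ι → ℕ → R} {b : ℕ → R}
    (hg : ∀ m, Tendsto (fun i => g i m) l (𝓝 (b m))) (n : ℕ) :
    Tendsto (fun i => binomialConv a (g i) n) l (𝓝 (binomialConv a b n)) :=
  tendsto_finsetSum _ fun k _ => (hg (n - k)).const_mul _

end binomialConv

theorem Finset.Nat.sum_antidiagonalTuple_succ {M : Type*} [AddCommMonoid M] (k n : ℕ)
    (g : (Fin (k + 1) → ℕ) → M) :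
    ∑ x ∈ Nat.antidiagonalTuple (k + 1) n, g x
      = ∑ ij ∈ antidiagonal n, ∑ x ∈ Nat.antidiagonalTuple k ij.2, g (Fin.cons ij.1 x) := by
  simp only [Finset.sum, Nat.antidiagonalTuple, Multiset.Nat.antidiagonalTuple,
    List.Nat.antidiagonalTuple, Multiset.map_coe, Multiset.sum_coe, List.flatMap,
    List.map_flatten, List.sum_flatten, List.map_map, Function.comp_def]
  rfl

theorem Nat.multinomial_univ_fin_cons {k : ℕ} (a : ℕ) (x : Fin k → ℕ) :
    Nat.multinomial univ (Fin.cons a x : Fin (k + 1) → ℕ)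
      = (a + ∑ i, x i).choose a * Nat.multinomial univ x := by
  rw [Fin.univ_succ, Nat.multinomial_cons]
  simp [Nat.multinomial, Finset.sum_map, Finset.prod_map]

theorem eulerNumberOrder_succ (E : ℕ → ℚ) (r : ℕ) :
    eulerNumberOrder E (r + 1) = binomialConv E (eulerNumberOrder E r) := by
  ext n
  rw [eulerNumberOrder, Finset.Nat.sum_antidiagonalTuple_succ, binomialConv_eq_sum_antidiagonal]
  refine sum_congr rfl fun ij hij => ?_
  rw [eulerNumberOrder, mul_sum]
  refine sum_congr rfl fun x hx => ?_
  rw [Nat.multinomial_univ_fin_cons, Fin.prod_univ_succ, Finset.Nat.mem_antidiagonalTuple.1 hx,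
    HasAntidiagonal.mem_antidiagonal.1 hij]
  simp only [Fin.cons_zero, Fin.cons_succ, Nat.cast_mul]
  ring

theorem cast_eulerNumberOrder_zero {K : Type*} [DivisionRing K] (E : ℕ → ℚ) :
    (fun k => (eulerNumberOrder E 0 k : K)) = Pi.single 0 1 := by
  ext (_ | k) <;> simp [eulerNumberOrder]

section CharZero

variable {K : Type*} [Field K] [CharZero K]

theorem cast_eulerNumberOrder_succ (E : ℕ → ℚ) (r : ℕ) :
    (fun k => (eulerNumberOrder E (r + 1) k : K))
      = binomialConv (fun k => (eulerNumberOrder E r k : K)) (fun k => (E k : K)) := by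
  ext k
  rw [eulerNumberOrder_succ, binomialConv_comm, ← Rat.coe_castHom, map_binomialConv]

theorem euler_binomialConv_one_add_self {E : ℕ → ℚ} (hE0 : E 0 = 1)
    (hE : ∀ n : ℕ, 1 ≤ n → (∑ k ∈ Finset.range (n + 1), (n.choose k : ℚ) * E k) + E n = 0) :
    binomialConv (fun k => (E k : K)) 1 + (fun k => (E k : K)) = Pi.single 0 2 := by
  ext (_ | n)
  · norm_num [binomialConv, hE0]
  · simpa [binomialConv] using congrArg (Rat.cast : ℚ → K) (hE (n + 1) (by omega))

end CharZero

theorem binomialConv_add_one_pow_add_pow {R : Type*} [CommSemiring R] {e : ℕ → R}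
    (he : binomialConv e 1 + e = Pi.single 0 2) (y : R) (m : ℕ) :
    binomialConv e ((y + 1) ^ ·) m + binomialConv e (y ^ ·) m = 2 * y ^ m := by
  have hshift : (fun k => (y + 1) ^ k) = binomialConv 1 (y ^ ·) := by
    ext k
    rw [add_comm, ← binomialConv_pow_pow]
    simp_rw [one_pow]
    rfl
  rw [hshift, ← binomialConv_assoc, ← Pi.add_apply (binomialConv _ _), ← binomialConv_add_left, he,
    binomialConv_single_zero_left]

-- `S_N` of the statement, applied to `y ↦ g (x + y)`.
def fermionicSum {R : Type*} [Ring R] (p : ℕ) (g : R → R) (x : R) (N : ℕ) : R :=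
  ∑ u ∈ range (p ^ N), (-1) ^ u * g (x + u)

theorem sum_range_neg_one_pow_mul_add {R : Type*} [CommRing R] (Q : ℕ → R) (M : ℕ) :
    ∑ u ∈ range M, (-1) ^ u * (Q (u + 1) + Q u) = Q 0 - (-1) ^ M * Q M := by
  induction M with
  | zero => simp
  | succ M ih => rw [sum_range_succ, ih, pow_succ]; ring

theorem tendsto_fermionicSum_of_add_one_add {p : ℕ} [Fact p.Prime] (hp : Odd p)
    {g P : ℚ_[p] → ℚ_[p]} (hP : Continuous P) (hPg : ∀ y, P (y + 1) + P y = 2 * g y)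
    (x : ℚ_[p]) : Tendsto (fermionicSum p g x) atTop (𝓝 (P x)) := by
  have hsum : ∀ N, fermionicSum p g x N = (P x + P (x + p ^ N)) / 2 := by
    intro N
    have h := sum_range_neg_one_pow_mul_add (fun u => P (x + u)) (p ^ N)
    simp only [Nat.cast_add, Nat.cast_one, ← add_assoc, hPg, Nat.cast_pow, Nat.cast_zero, add_zero,
      hp.pow.neg_one_pow, mul_left_comm _ (2 : ℚ_[p]), ← mul_sum] at h
    rw [eq_div_iff two_ne_zero, fermionicSum]
    linear_combination h
  have hshift : Tendsto (fun N => x + (p : ℚ_[p]) ^ N) atTop (𝓝 x) := by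
    simpa using tendsto_const_nhds.add
      (tendsto_pow_atTop_nhds_zero_of_norm_lt_one Padic.norm_p_lt_one)
  have hlim := (tendsto_const_nhds (x := P x)).add ((hP.tendsto x).comp hshift) |>.div_const 2
  rw [funext hsum]
  simpa only [add_self_div_two, Function.comp_def] using hlim

theorem iterated_fermionic_integral_eq_higher_eulerPolynomial_general (p : ℕ) [Fact p.Prime]
    (hp : Odd p) (E : ℕ → ℚ) (hE0 : E 0 = 1)
    (hE : ∀ n : ℕ, 1 ≤ n → (∑ k ∈ Finset.range (n + 1), (n.choose k : ℚ) * E k) + E n = 0)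
    (n r : ℕ) (f : ℕ → ℚ_[p] → ℚ_[p])
    (hf0 : ∀ x : ℚ_[p], f 0 x = x ^ n)
    (hf : ∀ j < r, ∀ x : ℚ_[p],
      Tendsto (fun N : ℕ => ∑ u ∈ Finset.range (p ^ N), (-1 : ℚ_[p]) ^ u * f j (x + (u : ℚ_[p])))
        atTop (nhds (f (j + 1) x))) :
    ∀ x : ℚ_[p], f r x = ∑ k ∈ Finset.range (n + 1),
      (n.choose k : ℚ_[p]) * ((eulerNumberOrder E r k : ℚ) : ℚ_[p]) * x ^ (n - k) := by
  have hEuler : ∀ m x, Tendsto (fermionicSum p (· ^ m) x) atTop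
      (𝓝 (binomialConv (fun k => (E k : ℚ_[p])) (x ^ ·) m)) := fun m =>
    tendsto_fermionicSum_of_add_one_add hp (by unfold binomialConv; fun_prop)
      (binomialConv_add_one_pow_add_pow (euler_binomialConv_one_add_self hE0 hE) · m)
  suffices ∀ j ≤ r, ∀ x, f j x = binomialConv (fun k => (eulerNumberOrder E j k : ℚ_[p])) (x ^ ·) n
    from this r le_rfl
  intro j hj
  induction j with
  | zero => intro x; rw [hf0, cast_eulerNumberOrder_zero, binomialConv_single_zero_left, one_mul]
  | succ j ih =>
    intro x
    refine tendsto_nhds_unique (hf j hj x) ?_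
    simp_rw [ih (by omega), sum_mul_binomialConv, cast_eulerNumberOrder_succ, binomialConv_assoc]
    exact tendsto_binomialConv_right _ (hEuler · x) n

/-- Let `E : ℕ → ℚ` be the Euler numbers, defined by `E 0 = 1` and, for
`n ≥ 1`, `∑_{k=0}^{n} (n choose k) E k + E n = 0`. Let `p` be an odd prime, `n : ℕ`,
`r ≥ 1`, and suppose `f 0, f 1, …, f r : ℚ_[p] → ℚ_[p]` satisfy `f 0 x = x^n` and, for
each `j < r` and each `x`, the sequence `N ↦ ∑_{u=0}^{p^N-1} (-1)^u (f j) (x+u)` converges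
to `(f (j+1)) x`. Then for every `x : ℚ_[p]`,
`f r x = ∑_{k=0}^{n} (n choose k) E_k^{(r)} x^{n-k} = E_n^{(r)}(x)`, the `n`-th Euler
polynomial of order `r` evaluated at `x`. -/
theorem iterated_fermionic_integral_eq_higher_eulerPolynomial (p : ℕ) [Fact p.Prime]
    (hp : Odd p) (E : ℕ → ℚ) (hE0 : E 0 = 1)
    (hE : ∀ n : ℕ, 1 ≤ n → (∑ k ∈ Finset.range (n + 1), (n.choose k : ℚ) * E k) + E n = 0)
    (n r : ℕ) (hr : 1 ≤ r) (f : ℕ → ℚ_[p] → ℚ_[p])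
    (hf0 : ∀ x : ℚ_[p], f 0 x = x ^ n)
    (hf : ∀ j < r, ∀ x : ℚ_[p],
      Tendsto (fun N : ℕ => ∑ u ∈ Finset.range (p ^ N), (-1 : ℚ_[p]) ^ u * f j (x + (u : ℚ_[p])))
        atTop (nhds (f (j + 1) x))) :
    ∀ x : ℚ_[p], f r x = ∑ k ∈ Finset.range (n + 1),
      (n.choose k : ℚ_[p]) * ((eulerNumberOrder E r k : ℚ) : ℚ_[p]) * x ^ (n - k) :=
  iterated_fermionic_integral_eq_higher_eulerPolynomial_general p hp E hE0 hE n r f hf0 hf
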